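/- arXiv:2401.07981 — 3 statements merged into one kernel-verified Lean document; each statement's English description precedes it below -/
import Mathlib

section
/- For p ∈ (0,1), q = 1 - p, and integers k ≥ 1 and j ≥ 1, the j-th factorial moment of the truncated geometric random variable X on {1,...,k} with P(X = i) = q p^{i-1}/(1-p^k) satisfies μ_{(j)} := ∑_{i=1}^{k} i(i-1)⋯(i-j+1) · q p^{i-1}/(1-p^k) = C_j p^k/(1-p^k), where C_j = (j!/(q^j p^k)) [ p^{j-1}(1-p^k) - p^k ∑_{i=1}^{j-1} C(k,i) p^{j-i-1} q^i ] - (k)_j and (k)_j = k(k-1)⋯(k-j+1). -/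
/-!
Write `j = m + 1`. Since `(i)_j = j! C(i, j)`, clearing denominators reduces the claim to the
polynomial identity, valid whenever `p + q = 1`,
`q^(m+2) ∑_{i=1}^k C(i, m+1) p^(i-1) + p^k (B_k + C(k, m+1) q^(m+1)) = p^m`,
where `B_k = ∑_{i ≤ m} C(k, i) p^(m-i) q^i`. It holds at `k = 0` since `B_0 = p^m`, and the step
`k → k + 1` reduces, via Pascal's rule, to `B_k = p B_{k+1} + C(k, m) q^(m+1)`, which follows by
induction on `m`.
-/

open Finset

namespace TruncatedGeometric

variable {R : Type*} [CommRing R]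

theorem prod_range_natCast_sub_eq_factorial_mul_choose (n j : ℕ) :
    ∏ t ∈ range j, ((n : R) - t) = j.factorial * n.choose j := by
  rw [prod_range_natCast_sub, ← Nat.descFactorial_eq_prod_range,
    Nat.descFactorial_eq_factorial_mul_choose, Nat.cast_mul]

def partialBinomialSum (p q : R) (k m : ℕ) : R :=
  ∑ i ∈ range (m + 1), (k.choose i : R) * p ^ (m - i) * q ^ i

variable (p q : R)

theorem partialBinomialSum_zero_left (m : ℕ) : partialBinomialSum p q 0 m = p ^ m := by
  rw [partialBinomialSum, sum_range_succ', sum_eq_zero fun i _ => by simp]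
  simp

theorem partialBinomialSum_succ_right (k m : ℕ) :
    partialBinomialSum p q k (m + 1) =
      p * partialBinomialSum p q k m + k.choose (m + 1) * q ^ (m + 1) := by
  rw [partialBinomialSum, sum_range_succ, partialBinomialSum, mul_sum, Nat.sub_self, pow_zero,
    mul_one]
  congr 1
  refine sum_congr rfl fun i hi => ?_
  rw [Nat.sub_add_comm (mem_range_succ_iff.1 hi), pow_succ]
  ring

theorem partialBinomialSum_zero_right (k : ℕ) : partialBinomialSum p q k 0 = 1 := by
  simp [partialBinomialSum]

theorem partialBinomialSum_eq_pow_add_sum_Icc (k m : ℕ) :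
    partialBinomialSum p q k m =
      p ^ m + ∑ i ∈ Icc 1 m, (k.choose i : R) * p ^ (m - i) * q ^ i := by
  rw [partialBinomialSum, Nat.range_succ_eq_Icc_zero, ← add_sum_Ioc_eq_sum_Icc m.zero_le,
    ← Icc_add_one_left_eq_Ioc]
  simp

variable {p q}

theorem partialBinomialSum_eq_mul_succ_left_add (hpq : p + q = 1) (k m : ℕ) :
    partialBinomialSum p q k m =
      p * partialBinomialSum p q (k + 1) m + k.choose m * q ^ (m + 1) := by
  induction m with
  | zero =>
    simp only [partialBinomialSum_zero_right, Nat.choose_zero_right]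
    linear_combination -hpq
  | succ m ih =>
    simp only [partialBinomialSum_succ_right, ih, Nat.choose_succ_succ, Nat.cast_add]
    linear_combination -(k.choose (m + 1) : R) * q ^ (m + 1) * hpq

theorem pow_mul_sum_choose_add_pow_mul_partialBinomialSum (hpq : p + q = 1) (m k : ℕ) :
    q ^ (m + 2) * ∑ i ∈ Icc 1 k, (i.choose (m + 1) : R) * p ^ (i - 1) +
      p ^ k * (partialBinomialSum p q k m + k.choose (m + 1) * q ^ (m + 1)) = p ^ m := by
  induction k with
  | zero => simp [partialBinomialSum_zero_left]
  | succ k ih =>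
    rw [sum_Icc_succ_top (by omega), Nat.add_sub_cancel,
      partialBinomialSum_eq_mul_succ_left_add hpq k m] at *
    simp only [Nat.choose_succ_succ, Nat.cast_add] at *
    linear_combination ih + p ^ k * (k.choose m + k.choose (m + 1) : R) * q ^ (m + 1) * hpq

end TruncatedGeometric

open TruncatedGeometric in
theorem stmt_2_general (p : ℝ) (hp0 : 0 < p) (hp1 : p < 1) (q : ℝ) (hq : q = 1 - p)
    (k j : ℕ) (hj : 1 ≤ j) :
    (∑ i ∈ Finset.Icc 1 k,
        (∏ t ∈ Finset.range j, ((i : ℝ) - t)) * (q * p ^ (i - 1) / (1 - p ^ k)))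
      =
      ((j.factorial : ℝ) / (q ^ j * p ^ k) *
          (p ^ (j - 1) * (1 - p ^ k) -
            p ^ k * ∑ i ∈ Finset.Icc 1 (j - 1), (k.choose i : ℝ) * p ^ (j - i - 1) * q ^ i)
        - ∏ t ∈ Finset.range j, ((k : ℝ) - t)) * p ^ k / (1 - p ^ k) := by
  obtain ⟨m, rfl⟩ : ∃ m, j = m + 1 := ⟨j - 1, by omega⟩
  have hq0 : q ≠ 0 := by linarith
  have key := pow_mul_sum_choose_add_pow_mul_partialBinomialSum (by linarith : p + q = 1) m k
  rw [partialBinomialSum_eq_pow_add_sum_Icc] at key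
  simp only [← mul_div_assoc, ← sum_div, prod_range_natCast_sub_eq_factorial_mul_choose,
    Nat.add_sub_cancel, Nat.sub_right_comm _ _ 1]
  congr 1
  rw [show ∑ i ∈ Icc 1 k, ((m + 1).factorial : ℝ) * i.choose (m + 1) * (q * p ^ (i - 1)) =
      (m + 1).factorial * q * ∑ i ∈ Icc 1 k, (i.choose (m + 1) : ℝ) * p ^ (i - 1) by
    rw [mul_sum]; exact sum_congr rfl fun _ _ => by ring]
  field_simp
  linear_combination key

/-- The `j`-th factorial moment of the truncated geometric distribution on `{1,…,k}`
equals `C_j p^k / (1 - p^k)`, where `C_j` is the closed form of Charalambides. -/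
theorem stmt_2 (p : ℝ) (hp0 : 0 < p) (hp1 : p < 1) (q : ℝ) (hq : q = 1 - p)
    (k j : ℕ) (hk : 1 ≤ k) (hj : 1 ≤ j) :
    (∑ i ∈ Finset.Icc 1 k,
        (∏ t ∈ Finset.range j, ((i : ℝ) - t)) * (q * p ^ (i - 1) / (1 - p ^ k)))
      =
      ((j.factorial : ℝ) / (q ^ j * p ^ k) *
          (p ^ (j - 1) * (1 - p ^ k) -
            p ^ k * ∑ i ∈ Finset.Icc 1 (j - 1), (k.choose i : ℝ) * p ^ (j - i - 1) * q ^ i)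
        - ∏ t ∈ Finset.range j, ((k : ℝ) - t)) * p ^ k / (1 - p ^ k) :=
  stmt_2_general p hp0 hp1 q hq k j hj
end

section
/- For a complex number λ with |λ| < 1 and positive integers i, m, the identity ∑_{n=i}^{∞} C(n,i) C(n-1,m-1) λ^n = (λ^i/(1-λ)^{i+m}) ∑_{b=1}^{m} C(m,b) C(i-1,b-1) λ^{m-b} holds. -/
/-!
Write `S(i, m)` for the series and `N(i, m) = [t^i] (1 + t)^(i-1) (λ + t)^m`, whose expansion is
the finite sum on the right. Pascal's rule applied to both binomial coefficients gives
`(1 - λ) S(i+1, m+1) = λ (S(i, m) + S(i, m+1) + S(i+1, m))`, and the generating polynomial makes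
`N` satisfy the matching recurrence `N(i+1, m+1) = (1 - λ) N(i, m) + N(i, m+1) + λ N(i+1, m)`.
So `S = λ^i N / (1 - λ)^(i+m)` propagates from the boundary cases `m = 1` and `i = 1`, which
reduce to `∑ C(n, k) λ^n = λ^k / (1 - λ)^(k+1)`.
-/

open Finset Polynomial

theorem hasSum_choose_mul_pow {𝕜 : Type*} [NormedField 𝕜] {lam : 𝕜} (hlam : ‖lam‖ < 1)
    (k : ℕ) :
    HasSum (fun n ↦ (n.choose k : 𝕜) * lam ^ n) (lam ^ k / (1 - lam) ^ (k + 1)) := by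
  rw [← hasSum_nat_add_iff' k]
  have hzero : ∑ n ∈ range k, (n.choose k : 𝕜) * lam ^ n = 0 :=
    sum_eq_zero fun n hn ↦ by simp [Nat.choose_eq_zero_of_lt (mem_range.mp hn)]
  rw [hzero, sub_zero, ← mul_one_div]
  exact ((hasSum_choose_mul_geometric_of_norm_lt_one k hlam).mul_left (lam ^ k)).congr_fun
    fun n ↦ by ring

theorem Nat.choose_succ_mul_choose_eq (p q n : ℕ) :
    (n + 1).choose (p + 2) * n.choose (q + 1) =
      (n.choose (p + 1) + n.choose (p + 2)) * ((n - 1).choose q + (n - 1).choose (q + 1)) := by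
  cases n with
  | zero => simp
  | succ n =>
    rw [Nat.choose_succ_succ (n + 1) (p + 1), Nat.choose_succ_succ n q, Nat.add_sub_cancel]

theorem Polynomial.coeff_one_add_X_pow_mul_X_pow {R : Type*} [Semiring R] (p b : ℕ) :
    ((1 + X) ^ p * X ^ (b + 1) : R[X]).coeff (p + 1) = p.choose b := by
  rw [coeff_mul_X_pow', coeff_one_add_X_pow]
  split_ifs with h
  · rw [Nat.add_sub_add_right, Nat.choose_symm (by omega)]
  · rw [Nat.choose_eq_zero_of_lt (by omega), Nat.cast_zero]

namespace ChooseSeries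

variable {𝕜 : Type*} [NormedField 𝕜]

noncomputable section

def term (lam : 𝕜) (i m n : ℕ) : 𝕜 :=
  (n.choose i : 𝕜) * ((n - 1).choose (m - 1) : 𝕜) * lam ^ n

def series (lam : 𝕜) (i m : ℕ) : 𝕜 := ∑' n, term lam i m n

def numerator (lam : 𝕜) (i m : ℕ) : 𝕜 := ((1 + X) ^ (i - 1) * (X + C lam) ^ m).coeff i

end

theorem summable_term [CompleteSpace 𝕜] {lam : 𝕜} (hlam : ‖lam‖ < 1) (i m : ℕ) :
    Summable (term lam i m) := by
  refine .of_norm ?_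
  have hu : (fun n ↦ ((n.choose i * (n - 1).choose (m - 1) : ℕ) : ℝ)) =O[Filter.atTop]
      (fun n ↦ ((n ^ (i + (m - 1)) : ℕ) : ℝ)) := by
    refine Asymptotics.IsBigO.of_bound 1 (Filter.Eventually.of_forall fun n ↦ ?_)
    simp only [Real.norm_natCast, one_mul, Nat.cast_le, pow_add]
    exact Nat.mul_le_mul (n.choose_le_pow i)
      ((Nat.choose_le_pow _ _).trans (Nat.pow_le_pow_left (n.sub_le 1) _))
  simpa [term] using summable_norm_mul_geometric_of_norm_lt_one hlam hu


theorem term_succ (lam : 𝕜) (p q n : ℕ) :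
    term lam (p + 2) (q + 2) (n + 1) = lam * (term lam (p + 1) (q + 1) n +
      term lam (p + 1) (q + 2) n + term lam (p + 2) (q + 1) n + term lam (p + 2) (q + 2) n) := by
  have h := congrArg (Nat.cast : ℕ → 𝕜) (Nat.choose_succ_mul_choose_eq p q n)
  push_cast at h
  simp only [term, Nat.add_sub_cancel, pow_succ, show q + 2 - 1 = q + 1 from rfl]
  linear_combination lam ^ n * lam * h

theorem series_succ_succ [CompleteSpace 𝕜] {lam : 𝕜} (hlam : ‖lam‖ < 1) (p q : ℕ) :
    (1 - lam) * series lam (p + 2) (q + 2) = lam *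
      (series lam (p + 1) (q + 1) + series lam (p + 1) (q + 2) + series lam (p + 2) (q + 1)) := by
  have hs (i m : ℕ) : HasSum (term lam i m) (series lam i m) := (summable_term hlam i m).hasSum
  have hshift : HasSum (fun n ↦ term lam (p + 2) (q + 2) (n + 1))
      (lam * (series lam (p + 1) (q + 1) + series lam (p + 1) (q + 2) +
        series lam (p + 2) (q + 1) + series lam (p + 2) (q + 2))) := by
    simpa only [term_succ] using ((((hs _ _).add (hs _ _)).add (hs _ _)).add (hs _ _)).mul_left lam
  have h := ((hasSum_nat_add_iff 1).mp hshift).unique (hs _ _)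
  simp only [range_one, sum_singleton, term, Nat.choose_zero_succ] at h
  linear_combination -h

theorem series_one_right {lam : 𝕜} (hlam : ‖lam‖ < 1) (i : ℕ) :
    series lam i 1 = lam ^ i / (1 - lam) ^ (i + 1) := by
  simpa [series, term] using (hasSum_choose_mul_pow hlam i).tsum_eq

theorem series_one_left {lam : 𝕜} (hlam : ‖lam‖ < 1) (q : ℕ) :
    series lam 1 (q + 1) = (q + 1) * lam ^ (q + 1) / (1 - lam) ^ (q + 2) := by
  have hcoeff (n : ℕ) : n.choose 1 * (n - 1).choose q = (q + 1) * n.choose (q + 1) := by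
    cases n with
    | zero => simp
    | succ n => simpa [mul_comm] using Nat.add_one_mul_choose_eq n q
  have hterm (n : ℕ) :
      term lam 1 (q + 1) n = (q + 1) * ((n.choose (q + 1) : 𝕜) * lam ^ n) := by
    simpa [term, mul_assoc] using congrArg (fun c : ℕ ↦ (c : 𝕜) * lam ^ n) (hcoeff n)
  rw [series, tsum_congr hterm, tsum_mul_left, (hasSum_choose_mul_pow hlam (q + 1)).tsum_eq]
  ring

theorem numerator_eq_sum (lam : 𝕜) (p m : ℕ) :
    numerator lam (p + 1) m =
      ∑ b ∈ Icc 1 m, (m.choose b : 𝕜) * (p.choose (b - 1) : 𝕜) * lam ^ (m - b) := by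
  rw [numerator, Nat.add_sub_cancel, (commute_X (C lam)).add_pow, mul_sum, finsetSum_coeff,
    range_eq_Ico, sum_eq_sum_Ico_succ_bot (by omega), zero_add, Ico_add_one_right_eq_Icc]
  have hzero :
      ((1 + X) ^ p * (X ^ 0 * C lam ^ (m - 0) * (m.choose 0 : 𝕜[X]))).coeff (p + 1) = 0 := by
    rw [pow_zero, one_mul, Nat.choose_zero_right, Nat.cast_one, mul_one, ← C_pow, coeff_mul_C,
      coeff_one_add_X_pow, Nat.choose_succ_self, Nat.cast_zero, zero_mul]
  rw [hzero, zero_add]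
  refine sum_congr rfl fun b hb ↦ ?_
  obtain ⟨c, rfl⟩ : ∃ c, b = c + 1 := ⟨b - 1, by grind⟩
  rw [← C_pow, ← C_eq_natCast, ← mul_assoc, ← mul_assoc, coeff_mul_C, coeff_mul_C,
    coeff_one_add_X_pow_mul_X_pow, Nat.add_sub_cancel]
  ring

theorem numerator_succ_succ (lam : 𝕜) (p q : ℕ) :
    numerator lam (p + 2) (q + 2) = (1 - lam) * numerator lam (p + 1) (q + 1) +
      numerator lam (p + 1) (q + 2) + lam * numerator lam (p + 2) (q + 1) := by
  set A : 𝕜[X] := (1 + X) ^ p * (X + C lam) ^ (q + 1)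
  have e22 : (1 + X) ^ (p + 1) * (X + C lam) ^ (q + 2) =
      X * (X * A) + X * A + C lam * (X * A) + C lam * A := by ring
  have e12 : (1 + X) ^ p * (X + C lam) ^ (q + 2) = X * A + C lam * A := by ring
  have e21 : (1 + X) ^ (p + 1) * (X + C lam) ^ (q + 1) = A + X * A := by ring
  simp only [numerator, Nat.add_sub_cancel, show p + 2 - 1 = p + 1 from rfl, e22, e12, e21,
    coeff_add, coeff_X_mul, coeff_C_mul]
  ring

theorem numerator_one_right (lam : 𝕜) (p : ℕ) : numerator lam (p + 1) 1 = 1 := by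
  simp [numerator, mul_add, coeff_one_add_X_pow]

theorem numerator_one_left (lam : 𝕜) (q : ℕ) :
    numerator lam 1 (q + 1) = (q + 1) * lam ^ q := by
  simp [numerator, coeff_X_add_C_pow, mul_comm]

theorem series_eq [CompleteSpace 𝕜] {lam : 𝕜} (hlam : ‖lam‖ < 1) (p q : ℕ) :
    series lam (p + 1) (q + 1) =
      lam ^ (p + 1) / (1 - lam) ^ (p + q + 2) * numerator lam (p + 1) (q + 1) := by
  have hne : 1 - lam ≠ 0 := sub_ne_zero.mpr fun h ↦ by simp [← h] at hlam
  induction p generalizing q with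
  | zero =>
    rw [series_one_left hlam, numerator_one_left]
    ring
  | succ p ihp =>
    induction q with
    | zero =>
      rw [series_one_right hlam, numerator_one_right]
      ring
    | succ q ihq =>
      have hrec := series_succ_succ hlam p q
      rw [ihp q, ihp (q + 1), ihq] at hrec
      rw [← mul_right_inj' hne, hrec, numerator_succ_succ]
      field_simp
      ring

end ChooseSeries

/-- Power-series summation identity:
`∑_{n≥i} C(n,i) C(n-1,m-1) λ^n = (λ^i/(1-λ)^{i+m}) ∑_{b=1}^{m} C(m,b) C(i-1,b-1) λ^{m-b}`
for `|λ| < 1` and positive integers `i, m`. -/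
theorem stmt_5 (lam : ℂ) (hlam : ‖lam‖ < 1) (i m : ℕ) (hi : 1 ≤ i) (hm : 1 ≤ m) :
    (∑' n : ℕ, (n.choose i : ℂ) * ((n - 1).choose (m - 1) : ℂ) * lam ^ n) =
      lam ^ i / (1 - lam) ^ (i + m) *
        ∑ b ∈ Finset.Icc 1 m, (m.choose b : ℂ) * ((i - 1).choose (b - 1) : ℂ) * lam ^ (m - b) := by
  obtain ⟨p, rfl⟩ := Nat.exists_eq_add_of_le' hi
  obtain ⟨q, rfl⟩ := Nat.exists_eq_add_of_le' hm
  simp only [Nat.add_sub_cancel]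
  rw [← ChooseSeries.numerator_eq_sum, show p + 1 + (q + 1) = p + q + 2 by ring]
  exact ChooseSeries.series_eq hlam p q
end

section
/- Let f_k(n) be defined by the recurrence f_k(n) = ∑_{j=1}^{k} p^{j-1} q f_k(n-j) for n > k, with initial conditions f_k(n) = 0 for 1 ≤ n ≤ k-1 and f_k(k) = p^k, where p ∈ (0,1) and q = 1-p. Then ∑_{n=1}^{∞} f_k(n) = 1. -/
/-!
With `T N = ∑_{i<k} p^i f(N - i)`, the recurrence reads `f (N + 1) = q T N`, and then
`T (N + 1) = q T N + p (T N - p^(k-1) f(N + 1 - k)) = T N - p^k f (N + 1 - k)`.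
Telescoping, `T (m + k) + p^k (f 1 + ⋯ + f m) = T k = p^k`. Since `f ≥ 0`, the partial sums
are bounded by `1`, so the series converges, `f → 0`, hence `T → 0` and the partial sums tend to `1`.
-/

open Finset Filter Topology

namespace GeometricOfOrder

noncomputable def windowSum (p : ℝ) (k : ℕ) (f : ℕ → ℝ) (N : ℕ) : ℝ :=
  ∑ i ∈ range k, p ^ i * f (N - i)

lemma windowSum_succ (p : ℝ) (k : ℕ) (f : ℕ → ℝ) (N : ℕ) :
    windowSum p (k + 1) f (N + 1) =
      f (N + 1) + p * windowSum p (k + 1) f N - p ^ (k + 1) * f (N - k) := by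
  simp only [windowSum]
  rw [sum_range_succ', sum_range_succ, mul_add, mul_sum]
  simp only [Nat.add_sub_add_right, pow_succ', mul_assoc, pow_zero, one_mul, Nat.sub_zero]
  ring

lemma sum_Icc_eq_mul_windowSum (p q : ℝ) (k : ℕ) (f : ℕ → ℝ) (n : ℕ) :
    ∑ j ∈ Icc 1 k, p ^ (j - 1) * q * f (n + 1 - j) = q * windowSum p k f n := by
  rw [← Ico_add_one_right_eq_Icc, sum_Ico_eq_sum_range, windowSum, mul_sum]
  refine sum_congr rfl fun i _ => ?_
  rw [Nat.add_sub_cancel_left, add_comm 1 i, Nat.add_sub_add_right]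
  ring

variable {p : ℝ} {k : ℕ} {f : ℕ → ℝ}

lemma nonneg_of_recurrence {q : ℝ} (hp : 0 ≤ p) (hq : 0 ≤ q)
    (hinit : ∀ n, 1 ≤ n → n ≤ k → 0 ≤ f n)
    (hrec : ∀ n, k ≤ n → f (n + 1) = q * windowSum p k f n) : ∀ n, 1 ≤ n → 0 ≤ f n := by
  intro n
  induction n using Nat.strong_induction_on with
  | _ n ih =>
    intro hn
    obtain hnk | hkn := le_or_gt n k
    · exact hinit n hn hnk
    obtain ⟨m, rfl⟩ : ∃ m, n = m + 1 := ⟨n - 1, by omega⟩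
    rw [hrec m (by omega)]
    refine mul_nonneg hq (sum_nonneg fun i hi => ?_)
    have := mem_range.1 hi
    exact mul_nonneg (pow_nonneg hp i) (ih _ (by omega) (by omega))

lemma windowSum_self (h0 : ∀ n, 1 ≤ n → n ≤ k → f n = 0) :
    windowSum p (k + 1) f (k + 1) = f (k + 1) := by
  have hvanish : ∀ i ∈ range k, p ^ (i + 1) * f (k - i) = 0 := fun i hi => by
    rw [h0 _ (by have := mem_range.1 hi; omega) (by omega), mul_zero]
  simp [windowSum, sum_range_succ', sum_eq_zero hvanish]

lemma windowSum_add_mul_sum_range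
    (hrec : ∀ n, k + 1 ≤ n → f (n + 1) = (1 - p) * windowSum p (k + 1) f n) (m : ℕ) :
    windowSum p (k + 1) f (m + (k + 1)) + p ^ (k + 1) * ∑ n ∈ range m, f (n + 1) =
      windowSum p (k + 1) f (k + 1) := by
  induction m with
  | zero => simp
  | succ m ih =>
    have hstep := windowSum_succ p k f (m + (k + 1))
    rw [hrec _ (by omega), show m + (k + 1) - k = m + 1 by omega] at hstep
    rw [show m + 1 + (k + 1) = m + (k + 1) + 1 by omega, sum_range_succ]
    linear_combination hstep + ih

lemma tendsto_windowSum_zero (hf : Tendsto f atTop (𝓝 0)) :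
    Tendsto (windowSum p k f) atTop (𝓝 0) := by
  unfold windowSum
  have := tendsto_finsetSum (range k) fun i _ =>
    (hf.comp (tendsto_sub_atTop_nat i)).const_mul (p ^ i)
  simpa only [mul_zero, sum_const_zero, Function.comp_def] using this

theorem hasSum_one_of_recurrence (hp0 : 0 < p) (hp1 : p ≤ 1)
    (h0 : ∀ n, 1 ≤ n → n ≤ k → f n = 0) (hkk : f (k + 1) = p ^ (k + 1))
    (hrec : ∀ n, k + 1 ≤ n → f (n + 1) = (1 - p) * windowSum p (k + 1) f n) :
    HasSum (fun n => f (n + 1)) 1 := by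
  have hpk : 0 < p ^ (k + 1) := pow_pos hp0 _
  have hf_nonneg : ∀ n, 1 ≤ n → 0 ≤ f n := by
    refine nonneg_of_recurrence hp0.le (by linarith) (fun n h1 hn => ?_) hrec
    obtain hn | rfl := hn.lt_or_eq
    · exact (h0 n h1 (Nat.le_of_lt_succ hn)).ge
    · exact hkk ▸ hpk.le
  have hidentity (m : ℕ) :
      windowSum p (k + 1) f (m + (k + 1)) + p ^ (k + 1) * ∑ n ∈ range m, f (n + 1) =
        p ^ (k + 1) := by
    rw [windowSum_add_mul_sum_range hrec, windowSum_self h0, hkk]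
  have hwindow_nonneg (m : ℕ) : 0 ≤ windowSum p (k + 1) f (m + (k + 1)) :=
    sum_nonneg fun i hi => mul_nonneg (pow_nonneg hp0.le i)
      (hf_nonneg _ (by have := mem_range.1 hi; omega))
  have hsum_le (m : ℕ) : ∑ n ∈ range m, f (n + 1) ≤ 1 := by
    nlinarith [hidentity m, hwindow_nonneg m]
  have hsummable : Summable (fun n => f (n + 1)) :=
    summable_of_sum_range_le (fun n => hf_nonneg _ n.succ_pos) hsum_le
  have hf_zero : Tendsto f atTop (𝓝 0) :=
    (tendsto_add_atTop_iff_nat 1).1 hsummable.tendsto_atTop_zero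
  have hwindow_zero : Tendsto (fun m => windowSum p (k + 1) f (m + (k + 1))) atTop (𝓝 0) :=
    (tendsto_add_atTop_iff_nat (k + 1)).2 (tendsto_windowSum_zero hf_zero)
  rw [hasSum_iff_tendsto_nat_of_nonneg (fun n => hf_nonneg _ n.succ_pos)]
  have := (hwindow_zero.div_const (p ^ (k + 1))).const_sub 1
  rw [zero_div, sub_zero] at this
  refine this.congr fun m => ?_
  field_simp
  linarith [hidentity m]

end GeometricOfOrder

/-- The pmf of the geometric distribution of order `k` (defined by its recurrence and
initial conditions) sums to 1. -/
theorem stmt_6 (p q : ℝ) (hp0 : 0 < p) (hp1 : p < 1) (hq : q = 1 - p)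
    (k : ℕ) (hk : 1 ≤ k) (f : ℕ → ℝ)
    (h0 : ∀ n, 1 ≤ n → n ≤ k - 1 → f n = 0)
    (hkk : f k = p ^ k)
    (hrec : ∀ n, k < n → f n = ∑ j ∈ Finset.Icc 1 k, p ^ (j - 1) * q * f (n - j)) :
    (∑' n : ℕ, f (n + 1)) = 1 := by
  obtain ⟨k, rfl⟩ : ∃ m, k = m + 1 := ⟨k - 1, by omega⟩
  subst hq
  refine (GeometricOfOrder.hasSum_one_of_recurrence hp0 hp1.le (by simpa using h0) hkk
    fun n hn => ?_).tsum_eq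
  rw [hrec (n + 1) (by omega), GeometricOfOrder.sum_Icc_eq_mul_windowSum]
end
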